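/- arXiv:1907.04726 — 2 statements merged into one kernel-verified Lean document; each statement's English description precedes it below -/
import Mathlib

section
/- (SO(2) global maximum) Let λ₁ ≥ λ₂ > 0 and D = diag(λ₁,λ₂). Then for every R ∈ SO(2), ‖sym(RᵀD − I)‖² ≤ (λ₁+1)² + (λ₂+1)², with equality iff R = −I. -/
/-!
Every `R ∈ SO(2)` is a rotation `!![c, -s; s, c]` with `c² + s² = 1`, and for it the energy is
`(c l₁ - 1)² + (c l₂ - 1)² + s² (l₁ - l₂)² / 2`. Eliminating `s²`, the gap to `(l₁ + 1)² + (l₂ + 1)²`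
factors as `(1 + c) ((1 - c) (l₁ + l₂)² / 2 + 2 (l₁ + l₂))`, whose second factor is positive for
`|c| ≤ 1` and `l₁ + l₂ > 0`; so the gap is nonnegative and vanishes exactly at `c = -1`, i.e. `R = -I`.
-/

open Matrix

noncomputable def symPart {n : Type*} (X : Matrix n n ℝ) : Matrix n n ℝ := (1/2 : ℝ) • (X + Xᵀ)

noncomputable def symStrainEnergy {n : Type*} [Fintype n] [DecidableEq n] (D R : Matrix n n ℝ) :
    ℝ :=
  trace ((symPart (Rᵀ * D - 1))ᵀ * symPart (Rᵀ * D - 1))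

lemma exists_eq_rotation_of_mem_specialOrthogonalGroup {K : Type*} [CommRing K]
    {M : Matrix (Fin 2) (Fin 2) K} (hM : M ∈ specialOrthogonalGroup (Fin 2) K) :
    ∃ c s : K, c ^ 2 + s ^ 2 = 1 ∧ M = !![c, -s; s, c] := by
  obtain ⟨h00, h01, hsq⟩ := mem_specialOrthogonalGroup_fin_two_iff.1 hM
  refine ⟨M 0 0, M 1 0, by rwa [h01, neg_sq] at hsq, ?_⟩
  ext i j
  fin_cases i <;> fin_cases j <;> simp [h00, h01]

lemma rotation_eq_neg_one_iff {K : Type*} [CommRing K] [NoZeroDivisors K] {c s : K}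
    (hcs : c ^ 2 + s ^ 2 = 1) : !![c, -s; s, c] = -1 ↔ c = -1 := by
  constructor
  · intro h
    simpa using congrFun (congrFun h 0) 0
  · rintro rfl
    have hs : s = 0 := pow_eq_zero_iff two_ne_zero |>.1 (by linear_combination hcs)
    ext i j
    fin_cases i <;> fin_cases j <;> simp [hs]

lemma symStrainEnergy_diag_rotation (l₁ l₂ c s : ℝ) :
    symStrainEnergy !![l₁, 0; 0, l₂] !![c, -s; s, c]
      = (c * l₁ - 1) ^ 2 + (c * l₂ - 1) ^ 2 + s ^ 2 * (l₁ - l₂) ^ 2 / 2 := by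
  simp [symStrainEnergy, symPart, trace_fin_two, mul_apply, Fin.sum_univ_two, one_apply]
  ring

lemma sub_symStrainEnergy_diag_rotation {l₁ l₂ c s : ℝ} (hcs : c ^ 2 + s ^ 2 = 1) :
    (l₁ + 1) ^ 2 + (l₂ + 1) ^ 2 - symStrainEnergy !![l₁, 0; 0, l₂] !![c, -s; s, c]
      = (1 + c) * ((1 - c) * (l₁ + l₂) ^ 2 / 2 + 2 * (l₁ + l₂)) := by
  rw [symStrainEnergy_diag_rotation]
  linear_combination -(l₁ - l₂) ^ 2 / 2 * hcs

theorem symStrainEnergy_diag_le_and_eq_iff {l₁ l₂ : ℝ} (hl : 0 < l₁ + l₂)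
    {R : Matrix (Fin 2) (Fin 2) ℝ} (hR : R ∈ specialOrthogonalGroup (Fin 2) ℝ) :
    symStrainEnergy !![l₁, 0; 0, l₂] R ≤ (l₁ + 1) ^ 2 + (l₂ + 1) ^ 2 ∧
      (symStrainEnergy !![l₁, 0; 0, l₂] R = (l₁ + 1) ^ 2 + (l₂ + 1) ^ 2 ↔ R = -1) := by
  obtain ⟨c, s, hcs, rfl⟩ := exists_eq_rotation_of_mem_specialOrthogonalGroup hR
  have hgap := sub_symStrainEnergy_diag_rotation (l₁ := l₁) (l₂ := l₂) hcs
  have hc_le : c ≤ 1 := by nlinarith [sq_nonneg s]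
  have hc_ge : -1 ≤ c := by nlinarith [sq_nonneg s]
  have hpos : 0 < (1 - c) * (l₁ + l₂) ^ 2 / 2 + 2 * (l₁ + l₂) := by
    have := mul_nonneg (sub_nonneg.2 hc_le) (sq_nonneg (l₁ + l₂))
    linarith
  refine ⟨sub_nonneg.1 (hgap ▸ mul_nonneg (by linarith) hpos.le), ?_⟩
  rw [rotation_eq_neg_one_iff hcs, eq_comm, ← sub_eq_zero, hgap, mul_eq_zero,
    or_iff_left hpos.ne', add_eq_zero_iff_eq_neg']

theorem stmt13 (l1 l2 : ℝ) (hl : l1 ≥ l2) (hl2 : l2 > 0)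
    (W : Matrix (Fin 2) (Fin 2) ℝ → ℝ)
    (hW : W = fun R =>
      Matrix.trace (((1/2 : ℝ) • ((Rᵀ * !![l1, 0; 0, l2] - 1)
          + (Rᵀ * !![l1, 0; 0, l2] - 1)ᵀ))ᵀ *
        ((1/2 : ℝ) • ((Rᵀ * !![l1, 0; 0, l2] - 1)
          + (Rᵀ * !![l1, 0; 0, l2] - 1)ᵀ)))) :
    ∀ R : Matrix (Fin 2) (Fin 2) ℝ, Rᵀ * R = 1 → R.det = 1 →
      W R ≤ (l1 + 1)^2 + (l2 + 1)^2 ∧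
      (W R = (l1 + 1)^2 + (l2 + 1)^2 ↔ R = -1) := by
  intro R hR hdet
  subst hW
  exact symStrainEnergy_diag_le_and_eq_iff (by linarith)
    ⟨(mem_orthogonalGroup_iff' _ _).2 hR, hdet⟩
end

section
/- (SO(3) global minimum, case λ₁+λ₂ > 2) Let λ₁ ≥ λ₂ ≥ λ₃ > 0 with λ₁+λ₂ > 2 and D = diag(λ₁,λ₂,λ₃). Then for every R ∈ SO(3), ‖sym(RᵀD − I)‖² ≥ (λ₃−1)² + (1/2)(λ₁−λ₂)², and equality is attained by the block-diagonal rotation R₀ = [[c, −s, 0],[s, c, 0],[0,0,1]] with c = 2/(λ₁+λ₂), s = √(1−c²). -/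
/-!
Write `q₁ = 1 + R₀₀ - R₁₁ - R₂₂` and `q₂ = 1 - R₀₀ + R₁₁ - R₂₂`; for a rotation these are `4x²` and
`4y²` in terms of a unit quaternion `(w, x, y, z)`, so they are nonnegative. Using only that the rows
of `R` are unit vectors and that each diagonal entry of `R` equals its cofactor, one has the identity
`‖sym(RᵀD - I)‖² - (λ₃ - 1)² - ½(λ₁ - λ₂)²`
`  = ½(tr(DR) - 2 - λ₃)² + ½(λ₁ - λ₃)(λ₂ + λ₃) q₁ + ½(λ₂ - λ₃)(λ₁ + λ₃) q₂`,
whose right-hand side is nonnegative when `0 ≤ λ₃ ≤ λ₁, λ₂`. At `R₀` all three terms vanish.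
-/

open Matrix

theorem Matrix.adjugate_eq_transpose_of_transpose_mul_self_eq_one {n α : Type*} [Fintype n]
    [DecidableEq n] [CommRing α] {R : Matrix n n α} (hR : Rᵀ * R = 1) (hdet : R.det = 1) :
    adjugate R = Rᵀ :=
  calc adjugate R = adjugate R * (R * Rᵀ) := by rw [mul_eq_one_comm.mp hR, Matrix.mul_one]
    _ = Rᵀ := by rw [← Matrix.mul_assoc, adjugate_mul, hdet, one_smul, Matrix.one_mul]

section RotationFinThree

variable {R : Matrix (Fin 3) (Fin 3) ℝ}

theorem row_sq_sum_eq_one_of_transpose_mul_self_eq_one (hR : Rᵀ * R = 1) (i : Fin 3) :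
    R i 0 ^ 2 + R i 1 ^ 2 + R i 2 ^ 2 = 1 := by
  have h := congrFun (congrFun (mul_eq_one_comm.mp hR : R * Rᵀ = 1) i) i
  simpa [Matrix.mul_apply, Fin.sum_univ_three, sq] using h

theorem diag_eq_cofactor_of_mem_SO3 (hR : Rᵀ * R = 1) (hdet : R.det = 1) :
    R 1 1 * R 2 2 - R 1 2 * R 2 1 = R 0 0 ∧ R 0 0 * R 2 2 - R 0 2 * R 2 0 = R 1 1 ∧
      R 0 0 * R 1 1 - R 0 1 * R 1 0 = R 2 2 := by
  have hadj := adjugate_eq_transpose_of_transpose_mul_self_eq_one hR hdet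
  rw [adjugate_fin_three] at hadj
  refine ⟨?_, ?_, ?_⟩
  · simpa using congrFun (congrFun hadj 0) 0
  · simpa using congrFun (congrFun hadj 1) 1
  · simpa using congrFun (congrFun hadj 2) 2

theorem nonneg_of_sq_add_sq_add_sq_add_sq_eq {q a b d : ℝ} (h : q ^ 2 + a ^ 2 + b ^ 2 + d ^ 2 = 4 * q) :
    0 ≤ q := by
  nlinarith [sq_nonneg q, sq_nonneg a, sq_nonneg b, sq_nonneg d]

theorem one_add_sub_sub_nonneg_of_mem_SO3 (hR : Rᵀ * R = 1) (hdet : R.det = 1) :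
    0 ≤ 1 + R 0 0 - R 1 1 - R 2 2 := by
  obtain ⟨e₀, e₁, e₂⟩ := diag_eq_cofactor_of_mem_SO3 hR hdet
  have r := row_sq_sum_eq_one_of_transpose_mul_self_eq_one hR
  refine nonneg_of_sq_add_sq_add_sq_add_sq_eq (a := R 1 2 - R 2 1) (b := R 0 2 + R 2 0)
    (d := R 0 1 + R 1 0) ?_
  linear_combination r 0 + r 1 + r 2 + 2 * e₀ - 2 * e₁ - 2 * e₂

theorem one_sub_add_sub_nonneg_of_mem_SO3 (hR : Rᵀ * R = 1) (hdet : R.det = 1) :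
    0 ≤ 1 - R 0 0 + R 1 1 - R 2 2 := by
  obtain ⟨e₀, e₁, e₂⟩ := diag_eq_cofactor_of_mem_SO3 hR hdet
  have r := row_sq_sum_eq_one_of_transpose_mul_self_eq_one hR
  refine nonneg_of_sq_add_sq_add_sq_add_sq_eq (a := R 1 2 + R 2 1) (b := R 0 2 - R 2 0)
    (d := R 0 1 + R 1 0) ?_
  linear_combination r 0 + r 1 + r 2 - 2 * e₀ + 2 * e₁ - 2 * e₂

end RotationFinThree

/-- `‖sym(RᵀD - I)‖²` for the Frobenius norm. -/
noncomputable def symResidualSq {n : Type*} [Fintype n] [DecidableEq n] (D R : Matrix n n ℝ) : ℝ :=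
  trace (((1/2 : ℝ) • ((Rᵀ * D - 1) + (Rᵀ * D - 1)ᵀ))ᵀ * ((1/2 : ℝ) • ((Rᵀ * D - 1) + (Rᵀ * D - 1)ᵀ)))

section Diagonal

variable (l1 l2 l3 : ℝ)

theorem symResidualSq_diag_fin_three (R : Matrix (Fin 3) (Fin 3) ℝ) :
    symResidualSq !![l1, 0, 0; 0, l2, 0; 0, 0, l3] R
      = (l1 * R 0 0 - 1) ^ 2 + (l2 * R 1 1 - 1) ^ 2 + (l3 * R 2 2 - 1) ^ 2
        + (1/2) * ((l1 * R 0 1 + l2 * R 1 0) ^ 2 + (l1 * R 0 2 + l3 * R 2 0) ^ 2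
          + (l2 * R 1 2 + l3 * R 2 1) ^ 2) := by
  simp [symResidualSq, trace_fin_three, Matrix.mul_apply, Fin.sum_univ_three, Matrix.one_apply]
  ring

theorem symResidualSq_diag_sub_eq_of_mem_SO3 {R : Matrix (Fin 3) (Fin 3) ℝ} (hR : Rᵀ * R = 1)
    (hdet : R.det = 1) :
    symResidualSq !![l1, 0, 0; 0, l2, 0; 0, 0, l3] R - ((l3 - 1) ^ 2 + (1/2) * (l1 - l2) ^ 2)
      = (1/2) * (l1 * R 0 0 + l2 * R 1 1 + l3 * R 2 2 - 2 - l3) ^ 2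
        + (1/2) * ((l1 - l3) * (l2 + l3)) * (1 + R 0 0 - R 1 1 - R 2 2)
        + (1/2) * ((l2 - l3) * (l1 + l3)) * (1 - R 0 0 + R 1 1 - R 2 2) := by
  obtain ⟨e₀, e₁, e₂⟩ := diag_eq_cofactor_of_mem_SO3 hR hdet
  have r := row_sq_sum_eq_one_of_transpose_mul_self_eq_one hR
  rw [symResidualSq_diag_fin_three]
  linear_combination (l1 ^ 2 / 2) * r 0 + (l2 ^ 2 / 2) * r 1 + (l3 ^ 2 / 2) * r 2
    - (l2 * l3) * e₀ - (l1 * l3) * e₁ - (l1 * l2) * e₂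

variable {l1 l2 l3}

theorem le_symResidualSq_diag_of_mem_SO3 (h13 : l3 ≤ l1) (h23 : l3 ≤ l2) (h3 : 0 ≤ l3)
    {R : Matrix (Fin 3) (Fin 3) ℝ} (hR : Rᵀ * R = 1) (hdet : R.det = 1) :
    (l3 - 1) ^ 2 + (1/2) * (l1 - l2) ^ 2 ≤ symResidualSq !![l1, 0, 0; 0, l2, 0; 0, 0, l3] R := by
  have key := symResidualSq_diag_sub_eq_of_mem_SO3 l1 l2 l3 hR hdet
  have hq₁ : 0 ≤ (l1 - l3) * (l2 + l3) * (1 + R 0 0 - R 1 1 - R 2 2) :=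
    mul_nonneg (mul_nonneg (by linarith) (by linarith)) (one_add_sub_sub_nonneg_of_mem_SO3 hR hdet)
  have hq₂ : 0 ≤ (l2 - l3) * (l1 + l3) * (1 - R 0 0 + R 1 1 - R 2 2) :=
    mul_nonneg (mul_nonneg (by linarith) (by linarith)) (one_sub_add_sub_nonneg_of_mem_SO3 hR hdet)
  nlinarith [sq_nonneg (l1 * R 0 0 + l2 * R 1 1 + l3 * R 2 2 - 2 - l3)]

theorem symResidualSq_diag_rotation {c s : ℝ} (hcs : c ^ 2 + s ^ 2 = 1) (hc : c * (l1 + l2) = 2) :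
    symResidualSq !![l1, 0, 0; 0, l2, 0; 0, 0, l3] !![c, -s, 0; s, c, 0; 0, 0, 1]
      = (l3 - 1) ^ 2 + (1/2) * (l1 - l2) ^ 2 := by
  rw [symResidualSq_diag_fin_three]
  simp only [of_apply, cons_val', cons_val_zero, cons_val_one, cons_val_two, empty_val',
    cons_val_fin_one, tail_cons, vecHead]
  linear_combination ((l1 - l2) ^ 2 / 2) * hcs + ((c * (l1 + l2) - 2) / 2) * hc

end Diagonal

theorem stmt18 (l1 l2 l3 : ℝ) (h12 : l1 ≥ l2) (h23 : l2 ≥ l3) (h3 : l3 > 0)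
    (hsum : l1 + l2 > 2)
    (c s : ℝ) (hc : c = 2 / (l1 + l2)) (hs : s = Real.sqrt (1 - c^2))
    (W : Matrix (Fin 3) (Fin 3) ℝ → ℝ)
    (hW : W = fun R =>
      Matrix.trace (((1/2 : ℝ) • ((Rᵀ * !![l1, 0, 0; 0, l2, 0; 0, 0, l3] - 1)
          + (Rᵀ * !![l1, 0, 0; 0, l2, 0; 0, 0, l3] - 1)ᵀ))ᵀ *
        ((1/2 : ℝ) • ((Rᵀ * !![l1, 0, 0; 0, l2, 0; 0, 0, l3] - 1)
          + (Rᵀ * !![l1, 0, 0; 0, l2, 0; 0, 0, l3] - 1)ᵀ)))) :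
    (∀ R : Matrix (Fin 3) (Fin 3) ℝ, Rᵀ * R = 1 → R.det = 1 →
      (l3 - 1)^2 + (1/2) * (l1 - l2)^2 ≤ W R) ∧
    W !![c, -s, 0; s, c, 0; 0, 0, 1] = (l3 - 1)^2 + (1/2) * (l1 - l2)^2 := by
  have hW' : W = symResidualSq !![l1, 0, 0; 0, l2, 0; 0, 0, l3] := hW
  have hpos : 0 < l1 + l2 := by linarith
  have hc_mul : c * (l1 + l2) = 2 := by rw [hc]; field_simp
  have hc_le : c ≤ 1 := by rw [hc, div_le_one hpos]; linarith
  have hc_nonneg : 0 ≤ c := by rw [hc]; positivity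
  have hcs : c ^ 2 + s ^ 2 = 1 := by
    rw [hs, Real.sq_sqrt (by nlinarith)]; ring
  rw [hW']
  exact ⟨fun R hR hdet => le_symResidualSq_diag_of_mem_SO3 (by linarith) h23 h3.le hR hdet,
    symResidualSq_diag_rotation hcs hc_mul⟩
end
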